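/- arXiv:2304.08804 — 9 statements merged into one kernel-verified Lean document; each statement's English description precedes it below -/
import Mathlib

section
/- Suppose Acc_AI < A ≤ 1. Then the final decision-making accuracy satisfies A + Acc_AI − 1 ≤ Acc_final ≤ 1 + Acc_AI − A. -/
theorem stmt_2 (Ac Aw Oc Ow AccAI A AccF : ℝ)
    (hAc : 0 ≤ Ac) (hAw : 0 ≤ Aw) (hOc : 0 ≤ Oc) (hOw : 0 ≤ Ow)
    (hsum : Ac + Aw + Oc + Ow = 1)
    (hAI : AccAI = Ac + Ow) (hAIlb : 1/2 < AccAI) (hAIub : AccAI ≤ 1)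
    (hA : A = Ac + Aw) (hF : AccF = Ac + Oc)
    (h0 : AccAI < A) (h1 : A ≤ 1) :
    A + AccAI - 1 ≤ AccF ∧ AccF ≤ 1 + AccAI - A := by constructor <;> nlinarith
end

section
/- Fix real numbers Acc_AI with 1/2 < Acc_AI ≤ 1 and A with 0 ≤ A ≤ 1 − Acc_AI. Then for every real x with 1 − Acc_AI − A ≤ x ≤ 1 − Acc_AI + A, there exist nonnegative reals A_correct, A_wrong, O_correct, O_wrong summing to 1 such that A_correct + O_wrong = Acc_AI, A_correct + A_wrong = A, and A_correct + O_correct = x. -/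
theorem stmt_3 (AccAI A : ℝ)
    (hAIlb : 1/2 < AccAI) (hAIub : AccAI ≤ 1)
    (hA0 : 0 ≤ A) (hA1 : A ≤ 1 - AccAI) :
    ∀ x : ℝ, 1 - AccAI - A ≤ x → x ≤ 1 - AccAI + A →
      ∃ Ac Aw Oc Ow : ℝ, 0 ≤ Ac ∧ 0 ≤ Aw ∧ 0 ≤ Oc ∧ 0 ≤ Ow ∧
        Ac + Aw + Oc + Ow = 1 ∧ Ac + Ow = AccAI ∧ Ac + Aw = A ∧ Ac + Oc = x := by
  intro x hx1 hx2
  refine ⟨(A + x + AccAI - 1)/2, (A - x + 1 - AccAI)/2, (x - A - AccAI + 1)/2,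
    (AccAI - A - x + 1)/2, by linarith, by linarith, by linarith, by linarith,
    by ring, by ring, by ring, by ring⟩
end

section
/- Fix real numbers Acc_AI with 1/2 < Acc_AI ≤ 1 and A with 1 − Acc_AI < A ≤ Acc_AI. Then for every real x with A + Acc_AI − 1 ≤ x ≤ 1 − Acc_AI + A, there exist nonnegative reals A_correct, A_wrong, O_correct, O_wrong summing to 1 such that A_correct + O_wrong = Acc_AI, A_correct + A_wrong = A, and A_correct + O_correct = x. -/
theorem stmt_4 (AccAI A : ℝ)
    (hAIlb : 1/2 < AccAI) (hAIub : AccAI ≤ 1)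
    (hA0 : 1 - AccAI < A) (hA1 : A ≤ AccAI) :
    ∀ x : ℝ, A + AccAI - 1 ≤ x → x ≤ 1 - AccAI + A →
      ∃ Ac Aw Oc Ow : ℝ, 0 ≤ Ac ∧ 0 ≤ Aw ∧ 0 ≤ Oc ∧ 0 ≤ Ow ∧
        Ac + Aw + Oc + Ow = 1 ∧ Ac + Ow = AccAI ∧ Ac + Aw = A ∧ Ac + Oc = x := by
  intro x hx1 hx2
  refine ⟨(A + AccAI - 1 + x)/2, (A - AccAI + 1 - x)/2, (x - A - AccAI + 1)/2,
    (AccAI - A + 1 - x)/2, by linarith, by linarith, by linarith, by linarith,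
    by ring, by ring, by ring, by ring⟩
end

section
/- Fix real numbers Acc_AI with 1/2 < Acc_AI ≤ 1 and A with Acc_AI < A ≤ 1. Then for every real x with A + Acc_AI − 1 ≤ x ≤ 1 + Acc_AI − A, there exist nonnegative reals A_correct, A_wrong, O_correct, O_wrong summing to 1 such that A_correct + O_wrong = Acc_AI, A_correct + A_wrong = A, and A_correct + O_correct = x. -/
theorem stmt_5 (AccAI A : ℝ)
    (hAIlb : 1/2 < AccAI) (hAIub : AccAI ≤ 1)
    (hA0 : AccAI < A) (hA1 : A ≤ 1) :
    ∀ x : ℝ, A + AccAI - 1 ≤ x → x ≤ 1 + AccAI - A →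
      ∃ Ac Aw Oc Ow : ℝ, 0 ≤ Ac ∧ 0 ≤ Aw ∧ 0 ≤ Oc ∧ 0 ≤ Ow ∧
        Ac + Aw + Oc + Ow = 1 ∧ Ac + Ow = AccAI ∧ Ac + Aw = A ∧ Ac + Oc = x := by
  intro x hx1 hx2
  refine ⟨(AccAI + x + A - 1)/2, (A - AccAI - x + 1)/2, (x - AccAI - A + 1)/2,
    (AccAI - x - A + 1)/2, by linarith, by linarith, by linarith, by linarith,
    by ring, by ring, by ring, by ring⟩
end

section
/- If the adherence level satisfies A < 2·Acc_AI − 1, then the final decision-making accuracy is strictly smaller than the AI accuracy, i.e., Acc_final < Acc_AI. -/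
theorem stmt_6 (Ac Aw Oc Ow AccAI A AccF : ℝ)
    (hAc : 0 ≤ Ac) (hAw : 0 ≤ Aw) (hOc : 0 ≤ Oc) (hOw : 0 ≤ Ow)
    (hsum : Ac + Aw + Oc + Ow = 1)
    (hAI : AccAI = Ac + Ow) (hAIlb : 1/2 < AccAI) (hAIub : AccAI ≤ 1)
    (hA : A = Ac + Aw) (hF : AccF = Ac + Oc)
    (h : A < 2 * AccAI - 1) :
    AccF < AccAI := by linarith
end

section
/- Fix real numbers Acc_AI with 1/2 < Acc_AI ≤ 1 and A with 2·Acc_AI − 1 < A < 1. Then there exist nonnegative reals A_correct, A_wrong, O_correct, O_wrong summing to 1 with A_correct + O_wrong = Acc_AI and A_correct + A_wrong = A such that the final accuracy exceeds the AI accuracy, i.e., A_correct + O_correct > Acc_AI. -/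
theorem stmt_7 (AccAI A : ℝ)
    (hAIlb : 1/2 < AccAI) (hAIub : AccAI ≤ 1)
    (hA0 : 2 * AccAI - 1 < A) (hA1 : A < 1) :
    ∃ Ac Aw Oc Ow : ℝ, 0 ≤ Ac ∧ 0 ≤ Aw ∧ 0 ≤ Oc ∧ 0 ≤ Ow ∧
      Ac + Aw + Oc + Ow = 1 ∧ Ac + Ow = AccAI ∧ Ac + Aw = A ∧
      Ac + Oc > AccAI := by
  rcases le_total A AccAI with h | h
  · exact ⟨A, 0, 1 - A - AccAI + A, AccAI - A, by linarith, le_refl 0, by linarith,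
      by linarith, by ring, by ring, by ring, by linarith⟩
  · exact ⟨AccAI, A - AccAI, 1 - A, 0, by linarith, by linarith, by linarith,
      le_refl 0, by ring, by ring, by ring, by linarith⟩
end

section
/- Suppose the human cannot discern correct and wrong AI recommendations, i.e., A_correct = A·Acc_AI, A_wrong = A·(1 − Acc_AI), O_correct = (1 − A)·(1 − Acc_AI), and O_wrong = (1 − A)·Acc_AI for an adherence level A ∈ [0, 1]. Then the final decision-making accuracy never exceeds the AI accuracy: Acc_final ≤ Acc_AI. -/
theorem stmt_10 (Ac Aw Oc Ow AccAI A AccF : ℝ)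
    (hAc : 0 ≤ Ac) (hAw : 0 ≤ Aw) (hOc : 0 ≤ Oc) (hOw : 0 ≤ Ow)
    (hsum : Ac + Aw + Oc + Ow = 1)
    (hAI : AccAI = Ac + Ow) (hAIlb : 1/2 < AccAI) (hAIub : AccAI ≤ 1)
    (hA : A = Ac + Aw) (hF : AccF = Ac + Oc)
    (hA0 : 0 ≤ A) (hA1 : A ≤ 1)
    (h1 : Ac = A * AccAI) (h2 : Aw = A * (1 - AccAI))
    (h3 : Oc = (1 - A) * (1 - AccAI)) (h4 : Ow = (1 - A) * AccAI) :
    AccF ≤ AccAI := by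
  nlinarith [mul_nonneg hA0 (sub_pos.mpr hAIlb).le, sub_nonneg.mpr hA1]
end

section
/- Suppose 1 − Acc_AI < A ≤ Acc_AI. Then the final decision-making accuracy attains its maximum value 1 − Acc_AI + A if and only if all adherence is to correct AI recommendations (A_correct = A), and it attains its minimum value A + Acc_AI − 1 if and only if all overrides are of correct AI recommendations (O_correct = 0, i.e., O_wrong = 1 − A). -/
theorem stmt_12 (Ac Aw Oc Ow AccAI A AccF : ℝ)
    (hAc : 0 ≤ Ac) (hAw : 0 ≤ Aw) (hOc : 0 ≤ Oc) (hOw : 0 ≤ Ow)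
    (hsum : Ac + Aw + Oc + Ow = 1)
    (hAI : AccAI = Ac + Ow) (hAIlb : 1/2 < AccAI) (hAIub : AccAI ≤ 1)
    (hA : A = Ac + Aw) (hF : AccF = Ac + Oc)
    (h0 : 1 - AccAI < A) (h1 : A ≤ AccAI) :
    (AccF = 1 - AccAI + A ↔ Ac = A) ∧ (AccF = A + AccAI - 1 ↔ Oc = 0) := by
  constructor <;> constructor <;> intro h <;> linarith
end

section
/- Suppose 0 < A < 1. Then the reliance-quality metric Q satisfies 0 ≤ Q ≤ 1, where Q = (Acc_final − (1 − Acc_AI − A)) / W if 0 < A ≤ 1 − Acc_AI and Q = (Acc_final + (1 − Acc_AI − A)) / W if 1 − Acc_AI < A < 1, with W = 2A if 0 < A ≤ 1 − Acc_AI, W = 2(1 − Acc_AI) if 1 − Acc_AI < A ≤ Acc_AI, and W = 2(1 − A) if Acc_AI < A < 1. -/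
theorem stmt_16 (Ac Aw Oc Ow AccAI A AccF W Q : ℝ)
    (hAc : 0 ≤ Ac) (hAw : 0 ≤ Aw) (hOc : 0 ≤ Oc) (hOw : 0 ≤ Ow)
    (hsum : Ac + Aw + Oc + Ow = 1)
    (hAI : AccAI = Ac + Ow) (hAIlb : 1/2 < AccAI) (hAIub : AccAI ≤ 1)
    (hA : A = Ac + Aw) (hF : AccF = Ac + Oc)
    (hA0 : 0 < A) (hA1 : A < 1)
    (hW : W = if A ≤ 1 - AccAI then 2 * A
              else if A ≤ AccAI then 2 * (1 - AccAI)
              else 2 * (1 - A))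
    (hQ : Q = if A ≤ 1 - AccAI then (AccF - (1 - AccAI - A)) / W
              else (AccF + (1 - AccAI - A)) / W) :
    0 ≤ Q ∧ Q ≤ 1 := by
  subst hAI hA hF
  split_ifs at hW hQ with h1 h2
  · -- A ≤ 1 - AccAI, W = 2A > 0, numerator = 2Ac
    constructor
    · rw [hQ, hW]; apply div_nonneg <;> linarith
    · rw [hQ, hW, div_le_one (by linarith)]; linarith
  · -- 1-AccAI < A ≤ AccAI, W = 2(1-AccAI), numerator = 2Oc
    by_cases hz : Ac + Ow = 1
    · have hW0 : W = 0 := by rw [hW, hz]; ring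
      rw [hQ, hW0, div_zero]; norm_num
    · have hlt : Ac + Ow < 1 := lt_of_le_of_ne hAIub hz
      constructor
      · rw [hQ, hW]; apply div_nonneg <;> linarith
      · rw [hQ, hW, div_le_one (by linarith)]; linarith
  · -- AccAI < A < 1, W = 2(1-A) > 0, numerator = 2Oc
    constructor
    · rw [hQ, hW]; apply div_nonneg <;> linarith
    · rw [hQ, hW, div_le_one (by linarith)]; linarith
end
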